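/- arXiv:2603.12973 — 6 statements merged into one kernel-verified Lean document; each statement's English description precedes it below -/
import Mathlib

section
/- Let V and W be normed vector spaces over ℂ, let H be a complex inner product space, let c > 0, and let ι : V → H be a linear map with ‖ι u‖_H ≤ c · ‖u‖_V for all u ∈ V. Let u_1, …, u_N ∈ V be vectors such that the family (ι u_1, …, ι u_N) is orthonormal in H. Then for every linear map T : V → W and every u in the linear span of {u_1, …, u_N}, one has ‖T u‖_W ≤ c · ‖u‖_V · Σ_{j=1}^N ‖T u_j‖_W. -/
/-! Writing `x = ∑ j, a j • u j`, the coefficient `a j = ⟪ι (u j), ι x⟫` is bounded by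
`‖ι x‖ ≤ c * ‖x‖`, since the `ι (u j)` are orthonormal; the triangle inequality applied to
`T x = ∑ j, a j • T (u j)` then gives the estimate. -/

open Finset

theorem Orthonormal.norm_coeff_le_norm_sum {𝕜 E ι : Type*} [RCLike 𝕜] [NormedAddCommGroup E]
    [InnerProductSpace 𝕜 E] [Fintype ι] {v : ι → E} (hv : Orthonormal 𝕜 v) (a : ι → 𝕜) (i : ι) :
    ‖a i‖ ≤ ‖∑ j, a j • v j‖ :=
  calc ‖a i‖ = ‖inner 𝕜 (v i) (∑ j, a j • v j)‖ := by rw [hv.inner_right_fintype]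
    _ ≤ ‖v i‖ * ‖∑ j, a j • v j‖ := norm_inner_le_norm _ _
    _ = ‖∑ j, a j • v j‖ := by rw [hv.1 i, one_mul]

theorem norm_sum_smul_le_of_norm_le {𝕜 E ι : Type*} [NormedField 𝕜] [SeminormedAddCommGroup E]
    [NormedSpace 𝕜 E] (s : Finset ι) {a : ι → 𝕜} {v : ι → E} {C : ℝ} (ha : ∀ i ∈ s, ‖a i‖ ≤ C) :
    ‖∑ i ∈ s, a i • v i‖ ≤ C * ∑ i ∈ s, ‖v i‖ :=
  calc ‖∑ i ∈ s, a i • v i‖ ≤ ∑ i ∈ s, ‖a i‖ * ‖v i‖ := norm_sum_le_of_le s fun i _ => norm_smul_le _ _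
    _ ≤ ∑ i ∈ s, C * ‖v i‖ := sum_le_sum fun i hi => by gcongr; exact ha i hi
    _ = C * ∑ i ∈ s, ‖v i‖ := (mul_sum _ _ _).symm

theorem stmt0_general {V W H : Type*}
    [NormedAddCommGroup V] [NormedSpace ℂ V]
    [NormedAddCommGroup W] [NormedSpace ℂ W]
    [NormedAddCommGroup H] [InnerProductSpace ℂ H]
    (c : ℝ)
    (ι : V →ₗ[ℂ] H) (hι : ∀ u : V, ‖ι u‖ ≤ c * ‖u‖)
    (N : ℕ) (u : Fin N → V)
    (hon : Orthonormal ℂ (fun j => ι (u j)))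
    (T : V →ₗ[ℂ] W) (x : V)
    (hx : x ∈ Submodule.span ℂ (Set.range u)) :
    ‖T x‖ ≤ c * ‖x‖ * ∑ j, ‖T (u j)‖ := by
  obtain ⟨a, rfl⟩ := (Submodule.mem_span_range_iff_exists_fun ℂ).1 hx
  have hcoeff : ∀ j ∈ univ, ‖a j‖ ≤ c * ‖∑ j, a j • u j‖ := fun j _ =>
    calc ‖a j‖ ≤ ‖∑ j, a j • ι (u j)‖ := hon.norm_coeff_le_norm_sum a j
      _ = ‖ι (∑ j, a j • u j)‖ := by simp only [map_sum, map_smul]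
      _ ≤ c * ‖∑ j, a j • u j‖ := hι _
  simpa only [map_sum, map_smul] using norm_sum_smul_le_of_norm_le univ hcoeff

/-- Let `V` and `W` be normed vector spaces over `ℂ`, let `H` be a complex
inner product space, let `c > 0`, and let `ι : V → H` be a linear map with
`‖ι u‖ ≤ c * ‖u‖` for all `u ∈ V`.  Let `u 1, …, u N ∈ V` be vectors such that the family
`(ι (u 1), …, ι (u N))` is orthonormal in `H`.  Then for every linear map `T : V → W` and every
`x` in the linear span of `{u 1, …, u N}`, one has
`‖T x‖ ≤ c * ‖x‖ * ∑ j, ‖T (u j)‖`. -/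
theorem stmt0 {V W H : Type*}
    [NormedAddCommGroup V] [NormedSpace ℂ V]
    [NormedAddCommGroup W] [NormedSpace ℂ W]
    [NormedAddCommGroup H] [InnerProductSpace ℂ H]
    (c : ℝ) (hc : 0 < c)
    (ι : V →ₗ[ℂ] H) (hι : ∀ u : V, ‖ι u‖ ≤ c * ‖u‖)
    (N : ℕ) (u : Fin N → V)
    (hon : Orthonormal ℂ (fun j => ι (u j)))
    (T : V →ₗ[ℂ] W) (x : V)
    (hx : x ∈ Submodule.span ℂ (Set.range u)) :
    ‖T x‖ ≤ c * ‖x‖ * ∑ j, ‖T (u j)‖ :=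
  stmt0_general c ι hι N u hon T x hx
end

section
/- Let H be a complex inner product space, let N ≥ 1 be an integer, let (u_1, …, u_N) be an orthonormal family in H, and let w_1, …, w_N ∈ H satisfy ‖u_j − w_j‖ ≤ √(1 + 1/(2N)) − 1 for every j. Then for every j one has (2N−1)/(2N) ≤ ‖w_j‖² ≤ (2N+1)/(2N), and Σ_{m ≠ j} |⟨w_j, w_m⟩| ≤ (N−1)/(2N). -/
/-!
Writing `w = u - (u - w)`, the Gram entry `⟪w j, w m⟫` differs from `⟪u j, u m⟫ = δ_{jm}` by at
most `2ε + ε²`, where `ε` bounds `‖u j - w j‖`. The choice `ε = √(1 + δ) - 1` makes `2ε + ε² = δ`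
with `δ = 1/(2N)`, and the `N - 1` off-diagonal entries of a row then sum to at most `(N-1)/(2N)`.
-/

open Finset

section Perturbation

variable {𝕜 E : Type*} [RCLike 𝕜] [NormedAddCommGroup E] [InnerProductSpace 𝕜 E]

theorem norm_inner_sub_inner_le (u v w z : E) :
    ‖inner 𝕜 w z - inner 𝕜 u v‖ ≤ ‖u - w‖ * ‖v‖ + ‖u‖ * ‖v - z‖ + ‖u - w‖ * ‖v - z‖ := by
  have hdecomp : inner 𝕜 w z - inner 𝕜 u v
      = inner 𝕜 (u - w) (v - z) - inner 𝕜 (u - w) v - inner 𝕜 u (v - z) := by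
    simp only [inner_sub_left, inner_sub_right]
    ring
  rw [hdecomp]
  calc _ ≤ ‖(inner 𝕜 (u - w) (v - z) : 𝕜)‖ + ‖(inner 𝕜 (u - w) v : 𝕜)‖
          + ‖(inner 𝕜 u (v - z) : 𝕜)‖ :=
        (norm_sub_le _ _).trans (add_le_add_left (norm_sub_le _ _) _)
    _ ≤ ‖u - w‖ * ‖v - z‖ + ‖u - w‖ * ‖v‖ + ‖u‖ * ‖v - z‖ := by
        gcongr <;> exact norm_inner_le_norm _ _
    _ = _ := by ring

variable {ι : Type*} {u w : ι → E} {ε : ℝ}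

theorem Orthonormal.norm_inner_sub_inner_le (hu : Orthonormal 𝕜 u)
    (hw : ∀ i, ‖u i - w i‖ ≤ ε) (i j : ι) :
    ‖inner 𝕜 (w i) (w j) - inner 𝕜 (u i) (u j)‖ ≤ 2 * ε + ε ^ 2 := by
  have hε : 0 ≤ ε := (norm_nonneg _).trans (hw i)
  calc _ ≤ ‖u i - w i‖ * ‖u j‖ + ‖u i‖ * ‖u j - w j‖ + ‖u i - w i‖ * ‖u j - w j‖ :=
        _root_.norm_inner_sub_inner_le _ _ _ _
    _ ≤ ε * 1 + 1 * ε + ε * ε := by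
        rw [hu.1 i, hu.1 j]
        gcongr <;> exact hw _
    _ = 2 * ε + ε ^ 2 := by ring

theorem Orthonormal.abs_sq_norm_sub_one_le (hu : Orthonormal 𝕜 u)
    (hw : ∀ i, ‖u i - w i‖ ≤ ε) (i : ι) :
    |‖w i‖ ^ 2 - 1| ≤ 2 * ε + ε ^ 2 := by
  have h := hu.norm_inner_sub_inner_le hw i i
  rwa [inner_self_eq_norm_sq_to_K, inner_self_eq_norm_sq_to_K, hu.1 i, ← RCLike.ofReal_pow,
    ← RCLike.ofReal_pow, ← RCLike.ofReal_sub, RCLike.norm_ofReal, one_pow] at h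

theorem Orthonormal.norm_inner_le_of_ne (hu : Orthonormal 𝕜 u)
    (hw : ∀ i, ‖u i - w i‖ ≤ ε) {i j : ι} (hij : i ≠ j) :
    ‖inner 𝕜 (w i) (w j)‖ ≤ 2 * ε + ε ^ 2 := by
  simpa [hu.2 hij] using hu.norm_inner_sub_inner_le hw i j

end Perturbation

theorem two_mul_sqrt_one_add_sub_one_add_sq {δ : ℝ} (hδ : 0 ≤ δ) :
    2 * (√(1 + δ) - 1) + (√(1 + δ) - 1) ^ 2 = δ := by
  have h := Real.sq_sqrt (by linarith : (0 : ℝ) ≤ 1 + δ)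
  linear_combination h

theorem stmt1_general {H : Type*} [NormedAddCommGroup H] [InnerProductSpace ℂ H]
    (N : ℕ) (u w : Fin N → H)
    (hon : Orthonormal ℂ u)
    (hw : ∀ j, ‖u j - w j‖ ≤ Real.sqrt (1 + 1 / (2 * N)) - 1) :
    ∀ j : Fin N,
      ((2 * (N : ℝ) - 1) / (2 * N) ≤ ‖w j‖ ^ 2 ∧ ‖w j‖ ^ 2 ≤ (2 * (N : ℝ) + 1) / (2 * N)) ∧
      ∑ m ∈ Finset.univ.filter (· ≠ j), ‖(inner ℂ (w j) (w m) : ℂ)‖ ≤ ((N : ℝ) - 1) / (2 * N) := by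
  intro j
  have hN : (0 : ℝ) < N := by exact_mod_cast j.pos
  have hδ := two_mul_sqrt_one_add_sub_one_add_sq (by positivity : (0 : ℝ) ≤ 1 / (2 * N))
  have hdiag := abs_le.mp (hδ ▸ hon.abs_sq_norm_sub_one_le hw j)
  have hoff : ∀ m ∈ univ.filter (· ≠ j), ‖(inner ℂ (w j) (w m) : ℂ)‖ ≤ 1 / (2 * N) :=
    fun m hm => hδ ▸ hon.norm_inner_le_of_ne hw (mem_filter.mp hm).2.symm
  have hcard : ((univ.filter (· ≠ j)).card : ℝ) = N - 1 := by
    rw [filter_ne', card_erase_of_mem (mem_univ j), card_univ, Fintype.card_fin,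
      Nat.cast_sub j.pos, Nat.cast_one]
  refine ⟨⟨?_, ?_⟩, ?_⟩
  · rw [div_le_iff₀ (by positivity)]
    nlinarith [mul_div_cancel₀ (1 : ℝ) (by positivity : (2 * N : ℝ) ≠ 0)]
  · rw [le_div_iff₀ (by positivity)]
    nlinarith [mul_div_cancel₀ (1 : ℝ) (by positivity : (2 * N : ℝ) ≠ 0)]
  · calc _ ≤ (univ.filter (· ≠ j)).card • (1 / (2 * N : ℝ)) := sum_le_card_nsmul _ _ _ hoff
      _ = ((N : ℝ) - 1) / (2 * N) := by rw [nsmul_eq_mul, hcard, mul_one_div]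

/-- Let `H` be a complex inner product space, `N ≥ 1`, let `(u 1, …, u N)` be an
orthonormal family in `H`, and let `w 1, …, w N ∈ H` satisfy
`‖u j - w j‖ ≤ √(1 + 1/(2N)) - 1` for every `j`.  Then for every `j` one has
`(2N-1)/(2N) ≤ ‖w j‖² ≤ (2N+1)/(2N)` and `∑_{m ≠ j} |⟨w j, w m⟩| ≤ (N-1)/(2N)`. -/
theorem stmt1 {H : Type*} [NormedAddCommGroup H] [InnerProductSpace ℂ H]
    (N : ℕ) (hN : 1 ≤ N) (u w : Fin N → H)
    (hon : Orthonormal ℂ u)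
    (hw : ∀ j, ‖u j - w j‖ ≤ Real.sqrt (1 + 1 / (2 * N)) - 1) :
    ∀ j : Fin N,
      ((2 * (N : ℝ) - 1) / (2 * N) ≤ ‖w j‖ ^ 2 ∧ ‖w j‖ ^ 2 ≤ (2 * (N : ℝ) + 1) / (2 * N)) ∧
      ∑ m ∈ Finset.univ.filter (· ≠ j), ‖(inner ℂ (w j) (w m) : ℂ)‖ ≤ ((N : ℝ) - 1) / (2 * N) :=
  stmt1_general N u w hon hw
end

section
/- Let H be a complex inner product space, let N ≥ 1, let (u_1, …, u_N) and (v_1, …, v_N) be orthonormal families in H, and let w_1, …, w_N lie in the linear span of {v_1, …, v_N} with ‖u_j − w_j‖ ≤ √(1 + 1/(2N)) − 1 for every j. Define the coefficient matrix M ∈ ℂ^{N×N} by the expansions w_j = Σ_{i=1}^N M_{ji} v_i. Then M is invertible, ‖M‖₂² ≤ 3/2, and ‖M⁻¹‖₂² ≤ 2. -/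
/-!
Orthonormality of `v` makes `M * Mᴴ` the (transposed) Gram matrix of `w`, while that of `u` is
`1`. Since `‖u j - w j‖ ≤ ε` with `(1 + ε)² - 1 = 1 / (2N)`, the entries of `M * Mᴴ - 1` are at
most `1 / (2N)`, so `‖M * Mᴴ - 1‖ ≤ 1/2`. The C⋆-identities `‖M‖² = ‖M * Mᴴ‖` and
`‖M⁻¹‖² = ‖(M * Mᴴ)⁻¹‖`, together with a Neumann series for `(M * Mᴴ)⁻¹`, give `3/2` and `2`.
-/

open Matrix

/-- The `ℓ²`-operator norm of a complex `N × N` matrix, i.e. the operator norm of the induced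
linear map on the Euclidean space `ℂ^N`. -/
noncomputable def l2OpNorm {N : ℕ} (M : Matrix (Fin N) (Fin N) ℂ) : ℝ :=
  ‖LinearMap.toContinuousLinearMap (Matrix.toEuclideanLin M)‖

open scoped InnerProductSpace

theorem isUnit_of_norm_mul_sub_one_lt_one {R : Type*} [NormedRing R] [HasSummableGeomSeries R]
    [IsDedekindFiniteMonoid R] {a b : R} (h : ‖a * b - 1‖ < 1) : IsUnit a := by
  have hunit := isUnit_one_sub_of_norm_lt_one (x := 1 - a * b) (by rwa [norm_sub_rev])
  rw [sub_sub_cancel] at hunit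
  exact isUnit_of_mul_isUnit_left hunit

namespace CStarRing

variable {R : Type*} [NormedRing R] [StarRing R] [CStarRing R] {a : R} {δ : ℝ}

theorem norm_one_le : ‖(1 : R)‖ ≤ 1 := by
  rcases subsingleton_or_nontrivial R with _ | _
  · simp [Subsingleton.elim (1 : R) 0]
  · exact norm_one.le

theorem norm_sq_le_of_norm_mul_star_sub_one_le (h : ‖a * star a - 1‖ ≤ δ) : ‖a‖ ^ 2 ≤ 1 + δ :=
  calc ‖a‖ ^ 2 = ‖1 + (a * star a - 1)‖ := by rw [add_sub_cancel, norm_self_mul_star, sq]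
    _ ≤ 1 + δ := (norm_add_le _ _).trans (add_le_add norm_one_le h)

variable [HasSummableGeomSeries R]

theorem norm_ringInverse_one_sub_le {t : R} (ht : ‖t‖ < 1) :
    ‖Ring.inverse (1 - t)‖ ≤ (1 - ‖t‖)⁻¹ := by
  rw [← geom_series_eq_inverse t ht]
  linarith [tsum_geometric_le_of_norm_lt_one t ht, norm_one_le (R := R)]

theorem norm_ringInverse_sq_le_of_norm_mul_star_sub_one_le (ha : IsUnit a)
    (h : ‖a * star a - 1‖ ≤ δ) (hδ : δ < 1) : ‖Ring.inverse a‖ ^ 2 ≤ (1 - δ)⁻¹ := by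
  have hlt : ‖1 - a * star a‖ < 1 := by rw [norm_sub_rev]; linarith
  calc ‖Ring.inverse a‖ ^ 2 = ‖Ring.inverse (1 - (1 - a * star a))‖ := by
        rw [sub_sub_cancel, Ring.inverse_mul (.inl ha), Ring.inverse_star, norm_star_mul_self, sq]
    _ ≤ (1 - ‖1 - a * star a‖)⁻¹ := norm_ringInverse_one_sub_le hlt
    _ ≤ (1 - δ)⁻¹ := by
        rw [norm_sub_rev] at hlt ⊢
        gcongr

end CStarRing

section

variable {𝕜 E : Type*} [RCLike 𝕜] [NormedAddCommGroup E] [InnerProductSpace 𝕜 E]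

theorem norm_inner_sub_inner_le_s4 {x y x' y' : E} {ε : ℝ} (hx : ‖x‖ ≤ 1) (hy : ‖y‖ ≤ 1)
    (hxx' : ‖x - x'‖ ≤ ε) (hyy' : ‖y - y'‖ ≤ ε) :
    ‖⟪x', y'⟫_𝕜 - ⟪x, y⟫_𝕜‖ ≤ (1 + ε) ^ 2 - 1 := by
  have hε : 0 ≤ ε := (norm_nonneg _).trans hxx'
  have hy' : ‖y'‖ ≤ 1 + ε := by
    calc ‖y'‖ = ‖y - (y - y')‖ := by rw [sub_sub_cancel]
      _ ≤ 1 + ε := (norm_sub_le _ _).trans (add_le_add hy hyy')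
  calc ‖⟪x', y'⟫_𝕜 - ⟪x, y⟫_𝕜‖ = ‖⟪x' - x, y'⟫_𝕜 + ⟪x, y' - y⟫_𝕜‖ := by
        rw [inner_sub_left, inner_sub_right]; ring_nf
    _ ≤ ‖x' - x‖ * ‖y'‖ + ‖x‖ * ‖y' - y‖ :=
        (norm_add_le _ _).trans (add_le_add (norm_inner_le_norm _ _) (norm_inner_le_norm _ _))
    _ ≤ ε * (1 + ε) + 1 * ε := by
        rw [norm_sub_rev x', norm_sub_rev y']
        gcongr
    _ = (1 + ε) ^ 2 - 1 := by ring

theorem Orthonormal.gram_sum_smul {ι κ : Type*} [Fintype ι] {v : ι → E} (hv : Orthonormal 𝕜 v)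
    (M : Matrix κ ι 𝕜) : gram 𝕜 (fun j ↦ ∑ i, M j i • v i) = (M * Mᴴ)ᵀ := by
  ext j m
  simp [gram, hv.inner_sum, mul_apply, mul_comm]

end

namespace Matrix

open scoped Matrix.Norms.L2Operator

variable {𝕜 m n : Type*} [RCLike 𝕜] [Fintype m] [Fintype n] [DecidableEq n]

theorem l2_opNorm_le_of_forall_norm_apply_le {A : Matrix m n 𝕜} {c : ℝ} (hc : 0 ≤ c)
    (h : ∀ i j, ‖A i j‖ ≤ c) : ‖A‖ ≤ √(Fintype.card m * Fintype.card n) * c := by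
  rw [l2_opNorm_def]
  refine ContinuousLinearMap.opNorm_le_bound _ (by positivity) fun x ↦ ?_
  have hrow : ∀ i, ‖(toEuclideanLin A x) i‖ ^ 2 ≤ c ^ 2 * (Fintype.card n * ‖x‖ ^ 2) := fun i ↦ by
    have hl1 : ‖(toEuclideanLin A x) i‖ ≤ c * ∑ j, ‖x j‖ := by
      calc ‖∑ j, A i j * x j‖ ≤ ∑ j, ‖A i j‖ * ‖x j‖ :=
            norm_sum_le_of_le _ fun j _ ↦ (norm_mul _ _).le
        _ ≤ c * ∑ j, ‖x j‖ := by rw [Finset.mul_sum]; gcongr; exact h i _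
    calc ‖(toEuclideanLin A x) i‖ ^ 2 ≤ c ^ 2 * (∑ j, ‖x j‖) ^ 2 := by
          rw [← mul_pow]; gcongr
      _ ≤ c ^ 2 * (Fintype.card n * ‖x‖ ^ 2) := by
          rw [EuclideanSpace.norm_sq_eq]
          gcongr
          exact sq_sum_le_card_mul_sum_sq
  refine (pow_le_pow_iff_left₀ (norm_nonneg _) (by positivity) two_ne_zero).mp ?_
  calc ‖toEuclideanLin A x‖ ^ 2 ≤ ∑ _i : m, c ^ 2 * (Fintype.card n * ‖x‖ ^ 2) := by
        rw [EuclideanSpace.norm_sq_eq]; exact Finset.sum_le_sum fun i _ ↦ hrow i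
    _ = (√(Fintype.card m * Fintype.card n) * c * ‖x‖) ^ 2 := by
        rw [mul_pow, mul_pow, Real.sq_sqrt (by positivity), Finset.sum_const, Finset.card_univ,
          nsmul_eq_mul]
        ring

end Matrix

open scoped Matrix.Norms.L2Operator in
theorem stmt4_general {H : Type*} [NormedAddCommGroup H] [InnerProductSpace ℂ H]
    (N : ℕ) (u v w : Fin N → H)
    (hu : Orthonormal ℂ u) (hv : Orthonormal ℂ v)
    (hw : ∀ j, ‖u j - w j‖ ≤ Real.sqrt (1 + 1 / (2 * N)) - 1)
    (M : Matrix (Fin N) (Fin N) ℂ)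
    (hM : ∀ j, w j = ∑ i, M j i • v i) :
    IsUnit M ∧ l2OpNorm M ^ 2 ≤ 3 / 2 ∧ l2OpNorm M⁻¹ ^ 2 ≤ 2 := by
  have hgram : M * Mᴴ = (gram ℂ w)ᵀ := by
    rw [funext hM, hv.gram_sum_smul, transpose_transpose]
  have hone : (1 : Matrix (Fin N) (Fin N) ℂ) = (gram ℂ u)ᵀ := by
    rw [gram_eq_one_iff_orthonormal.mpr hu, transpose_one]
  have hentry : ∀ j m, ‖(M * Mᴴ - 1) j m‖ ≤ 1 / (2 * N) := fun j m ↦ by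
    have hsq : (1 + (√(1 + 1 / (2 * N)) - 1)) ^ 2 - 1 = 1 / (2 * N) := by
      rw [add_sub_cancel, Real.sq_sqrt (by positivity), add_sub_cancel_left]
    rw [hgram, hone, Matrix.sub_apply, transpose_apply, transpose_apply, gram_apply, gram_apply,
      ← hsq]
    exact norm_inner_sub_inner_le_s4 (hu.1 m).le (hu.1 j).le (hw m) (hw j)
  have hdefect : ‖M * Mᴴ - 1‖ ≤ 1 / 2 := by
    refine (l2_opNorm_le_of_forall_norm_apply_le (by positivity) hentry).trans ?_
    rw [Fintype.card_fin, Real.sqrt_mul_self (Nat.cast_nonneg _), mul_one_div,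
      div_mul_eq_div_div_swap]
    exact div_le_div_of_nonneg_right (div_self_le_one _) zero_le_two
  have hunit : IsUnit M := isUnit_of_norm_mul_sub_one_lt_one (hdefect.trans_lt (by norm_num))
  refine ⟨hunit, ?_, ?_⟩
  · exact (CStarRing.norm_sq_le_of_norm_mul_star_sub_one_le hdefect).trans_eq (by norm_num)
  · rw [nonsing_inv_eq_ringInverse]
    exact (CStarRing.norm_ringInverse_sq_le_of_norm_mul_star_sub_one_le hunit hdefect
      (by norm_num)).trans_eq (by norm_num)

/-- Let `H` be a complex inner product space, `N ≥ 1`, let `(u 1, …, u N)` and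
`(v 1, …, v N)` be orthonormal families in `H`, and let `w 1, …, w N` lie in the linear span of
`{v 1, …, v N}` with `‖u j - w j‖ ≤ √(1 + 1/(2N)) - 1` for every `j`.  Define the coefficient
matrix `M ∈ ℂ^{N×N}` by the expansions `w j = ∑ i, M j i • v i`.  Then `M` is invertible,
`‖M‖₂² ≤ 3/2`, and `‖M⁻¹‖₂² ≤ 2`. -/
theorem stmt4 {H : Type*} [NormedAddCommGroup H] [InnerProductSpace ℂ H]
    (N : ℕ) (hN : 1 ≤ N) (u v w : Fin N → H)
    (hu : Orthonormal ℂ u) (hv : Orthonormal ℂ v)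
    (hspan : ∀ j, w j ∈ Submodule.span ℂ (Set.range v))
    (hw : ∀ j, ‖u j - w j‖ ≤ Real.sqrt (1 + 1 / (2 * N)) - 1)
    (M : Matrix (Fin N) (Fin N) ℂ)
    (hM : ∀ j, w j = ∑ i, M j i • v i) :
    IsUnit M ∧ l2OpNorm M ^ 2 ≤ 3 / 2 ∧ l2OpNorm M⁻¹ ^ 2 ≤ 2 :=
  stmt4_general N u v w hu hv hw M hM
end

section
/- Let 𝒯 be a finite set, ℳ ⊆ 𝒯, θ ∈ (0, 1], κ ≥ 0, and let μ, η, ϑ : 𝒯 → [0, ∞) be functions satisfying: (i) μ(t)² ≤ (303/200) η(t)² + 101 ϑ(t)² for every t ∈ 𝒯; (ii) η(t)² ≤ (101/50) μ(t)² + 202 ϑ(t)² for every t ∈ 𝒯; (iii) Σ_{t∈ℳ} η(t)² ≥ θ · Σ_{t∈𝒯} η(t)²; (iv) Σ_{t∈𝒯} ϑ(t)² ≤ κ · Σ_{t∈𝒯} μ(t)². Then Σ_{t∈ℳ} μ(t)² ≥ ((10000/30603) θ − (40300/303) κ) · Σ_{t∈𝒯} μ(t)². -/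
/-- Let `𝒯` be a finite set, `ℳ ⊆ 𝒯`, `θ ∈ (0,1]`, `κ ≥ 0`, and let
`μ, η, ϑ : 𝒯 → [0,∞)` satisfy: (i) `μ t ² ≤ (303/200) η t ² + 101 ϑ t ²`;
(ii) `η t ² ≤ (101/50) μ t ² + 202 ϑ t ²`; (iii) the Dörfler marking
`∑_{t ∈ ℳ} η t ² ≥ θ ∑_{t ∈ 𝒯} η t ²`; (iv) `∑_{t ∈ 𝒯} ϑ t ² ≤ κ ∑_{t ∈ 𝒯} μ t ²`.
Then `∑_{t ∈ ℳ} μ t ² ≥ ((10000/30603) θ - (40300/303) κ) ∑_{t ∈ 𝒯} μ t ²`. -/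
theorem stmt8 {α : Type*} (𝒯 ℳ : Finset α) (hℳ : ℳ ⊆ 𝒯)
    (θ κ : ℝ) (hθ : θ ∈ Set.Ioc (0 : ℝ) 1) (hκ : 0 ≤ κ)
    (μ η ϑ : α → ℝ)
    (hμ : ∀ t ∈ 𝒯, 0 ≤ μ t) (hη : ∀ t ∈ 𝒯, 0 ≤ η t) (hϑ : ∀ t ∈ 𝒯, 0 ≤ ϑ t)
    (h1 : ∀ t ∈ 𝒯, μ t ^ 2 ≤ 303 / 200 * η t ^ 2 + 101 * ϑ t ^ 2)
    (h2 : ∀ t ∈ 𝒯, η t ^ 2 ≤ 101 / 50 * μ t ^ 2 + 202 * ϑ t ^ 2)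
    (h3 : θ * ∑ t ∈ 𝒯, η t ^ 2 ≤ ∑ t ∈ ℳ, η t ^ 2)
    (h4 : ∑ t ∈ 𝒯, ϑ t ^ 2 ≤ κ * ∑ t ∈ 𝒯, μ t ^ 2) :
    (10000 / 30603 * θ - 40300 / 303 * κ) * ∑ t ∈ 𝒯, μ t ^ 2 ≤ ∑ t ∈ ℳ, μ t ^ 2 := by
  obtain ⟨hθ0, hθ1⟩ := hθ
  have hSμ : (0:ℝ) ≤ ∑ t ∈ 𝒯, μ t ^ 2 := Finset.sum_nonneg fun t _ => sq_nonneg _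
  have hSϑ : (0:ℝ) ≤ ∑ t ∈ 𝒯, ϑ t ^ 2 := Finset.sum_nonneg fun t _ => sq_nonneg _
  have hA : ∑ t ∈ 𝒯, μ t ^ 2 ≤ 303 / 200 * ∑ t ∈ 𝒯, η t ^ 2 + 101 * ∑ t ∈ 𝒯, ϑ t ^ 2 := by
    rw [Finset.mul_sum, Finset.mul_sum, ← Finset.sum_add_distrib]
    exact Finset.sum_le_sum h1
  have hB : ∑ t ∈ ℳ, η t ^ 2 ≤ 101 / 50 * ∑ t ∈ ℳ, μ t ^ 2 + 202 * ∑ t ∈ ℳ, ϑ t ^ 2 := by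
    rw [Finset.mul_sum, Finset.mul_sum, ← Finset.sum_add_distrib]
    exact Finset.sum_le_sum fun t ht => h2 t (hℳ ht)
  have hC : ∑ t ∈ ℳ, ϑ t ^ 2 ≤ ∑ t ∈ 𝒯, ϑ t ^ 2 :=
    Finset.sum_le_sum_of_subset_of_nonneg hℳ fun t _ _ => sq_nonneg _
  have hD : θ * ∑ t ∈ 𝒯, ϑ t ^ 2 ≤ ∑ t ∈ 𝒯, ϑ t ^ 2 := by nlinarith
  nlinarith [mul_le_mul_of_nonneg_left hA hθ0.le, hθ0.le.trans hθ1]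
end

section
/- Let ρ₁ ∈ (0, 1), β > 0, and C ≥ 0. Then there exist ε ∈ (0, 1) and ρ₂ ∈ (0, 1) such that: whenever nonnegative real numbers μ₀, μ₁, e₀, e₁ satisfy μ₁² + β e₁² ≤ ρ₁ μ₀² + (β/(1−ε)) e₀² and e₀² ≤ C² μ₀², one has μ₁² + β e₁² ≤ ρ₂ · (μ₀² + β e₀²). -/
/-- Let `ρ₁ ∈ (0,1)`, `β > 0`, `C ≥ 0`.  Then there exist `ε ∈ (0,1)` and
`ρ₂ ∈ (0,1)` such that: whenever nonnegative reals `μ₀, μ₁, e₀, e₁` satisfy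
`μ₁² + β e₁² ≤ ρ₁ μ₀² + (β/(1-ε)) e₀²` and `e₀² ≤ C² μ₀²`, one has
`μ₁² + β e₁² ≤ ρ₂ (μ₀² + β e₀²)`. -/
theorem stmt10 (ρ₁ β C : ℝ) (hρ₁ : ρ₁ ∈ Set.Ioo (0 : ℝ) 1) (hβ : 0 < β) (hC : 0 ≤ C) :
    ∃ ε ∈ Set.Ioo (0 : ℝ) 1, ∃ ρ₂ ∈ Set.Ioo (0 : ℝ) 1,
      ∀ μ₀ μ₁ e₀ e₁ : ℝ, 0 ≤ μ₀ → 0 ≤ μ₁ → 0 ≤ e₀ → 0 ≤ e₁ →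
        μ₁ ^ 2 + β * e₁ ^ 2 ≤ ρ₁ * μ₀ ^ 2 + β / (1 - ε) * e₀ ^ 2 →
        e₀ ^ 2 ≤ C ^ 2 * μ₀ ^ 2 →
        μ₁ ^ 2 + β * e₁ ^ 2 ≤ ρ₂ * (μ₀ ^ 2 + β * e₀ ^ 2) := by
  obtain ⟨hρ0, hρ1⟩ := hρ₁
  set δ : ℝ := (1 - ρ₁) / (2 * (β * C ^ 2 + 1)) with hδdef
  have hden : (0:ℝ) < 2 * (β * C ^ 2 + 1) := by positivity
  have hδpos : 0 < δ := by
    apply div_pos (by linarith) hden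
  have hδbC : δ * (β * C ^ 2) ≤ (1 - ρ₁) / 2 := by
    rw [hδdef, div_mul_eq_mul_div, div_le_div_iff₀ hden (by norm_num)]
    nlinarith [sq_nonneg C, hβ.le]
  have hδlt1 : δ < 1 := by
    rw [hδdef, div_lt_one hden]
    nlinarith [sq_nonneg C, hβ.le]
  refine ⟨δ / 4, ⟨by linarith, by linarith⟩,
    max (ρ₁ + δ * (β * C ^ 2)) (1 - δ / 2), ⟨?_, ?_⟩, ?_⟩
  · exact lt_of_lt_of_le hρ0 (le_max_of_le_left (by nlinarith [mul_nonneg hδpos.le (mul_nonneg hβ.le (sq_nonneg C))]))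
  · apply max_lt <;> linarith
  · intro μ₀ μ₁ e₀ e₁ h₀ h₁ h₂ h₃ hmain hrel
    have hε1 : (0:ℝ) < 1 - δ / 4 := by linarith
    have hinv : 1 / (1 - δ / 4) ≤ 1 + δ / 2 := by
      rw [div_le_iff₀ hε1]; nlinarith
    have hβe : β / (1 - δ / 4) * e₀ ^ 2 ≤ (1 + δ / 2) * β * e₀ ^ 2 := by
      have : β / (1 - δ / 4) ≤ (1 + δ / 2) * β := by
        rw [div_le_iff₀ hε1]; nlinarith [mul_nonneg (mul_nonneg hβ.le hδpos.le) (show (0:ℝ) ≤ 2 - δ by linarith)]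
      nlinarith [sq_nonneg e₀]
    have hm1 : ρ₁ + δ * (β * C ^ 2) ≤ max (ρ₁ + δ * (β * C ^ 2)) (1 - δ / 2) := le_max_left _ _
    have hm2 : 1 - δ / 2 ≤ max (ρ₁ + δ * (β * C ^ 2)) (1 - δ / 2) := le_max_right _ _
    -- key chain: μ₁²+βe₁² ≤ ρ₁μ₀² + (1+δ/2)βe₀²
    --           = ρ₁μ₀² + δβ e₀² + (1-δ/2)βe₀²  (since (1+δ/2) = δ + 1 - δ/2)
    --           ≤ (ρ₁+δβC²)μ₀² + (1-δ/2)βe₀² ≤ ρ₂(μ₀²+βe₀²)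
    nlinarith [sq_nonneg μ₀, sq_nonneg e₀, mul_nonneg hβ.le (sq_nonneg e₀),
      mul_le_mul_of_nonneg_left hrel (mul_nonneg hδpos.le hβ.le)]
end

section
/- Let ρ ∈ (0, 1), s > 0, D > 0, and let (ξ_k)_{k≥0} be a sequence of positive real numbers satisfying ξ_ℓ² ≤ ρ^{ℓ−k} ξ_k² for all integers 0 ≤ k ≤ ℓ. Let (a_ℓ)_{ℓ≥1} be nonnegative real numbers with a_ℓ ≤ D · Σ_{k=0}^{ℓ−1} ξ_k^{−1/s} for every ℓ ≥ 1. Then for every ℓ ≥ 1 with a_ℓ > 0, ξ_ℓ ≤ (D · ρ^{1/(2s)} / (1 − ρ^{1/(2s)}))^s · a_ℓ^{−s}. -/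
/-- Let `ρ ∈ (0,1)`, `s > 0`, `D > 0`, and let `(ξ k)` be a sequence of
positive reals with `ξ ℓ ² ≤ ρ^(ℓ-k) ξ k ²` for all `0 ≤ k ≤ ℓ`.  Let `(a ℓ)` be nonnegative
reals with `a ℓ ≤ D * ∑_{k=0}^{ℓ-1} ξ k ^ (-1/s)` for every `ℓ ≥ 1`.  Then for every `ℓ ≥ 1`
with `a ℓ > 0`, `ξ ℓ ≤ (D ρ^(1/(2s)) / (1 - ρ^(1/(2s))))^s * (a ℓ)^(-s)`. -/
theorem stmt13 (ρ s D : ℝ) (hρ : ρ ∈ Set.Ioo (0 : ℝ) 1) (hs : 0 < s) (hD : 0 < D)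
    (ξ : ℕ → ℝ) (hξ : ∀ k, 0 < ξ k)
    (hcontr : ∀ k ℓ : ℕ, k ≤ ℓ → ξ ℓ ^ 2 ≤ ρ ^ (ℓ - k) * ξ k ^ 2)
    (a : ℕ → ℝ) (ha : ∀ ℓ : ℕ, 1 ≤ ℓ → 0 ≤ a ℓ)
    (hbound : ∀ ℓ : ℕ, 1 ≤ ℓ → a ℓ ≤ D * ∑ k ∈ Finset.range ℓ, ξ k ^ (-(1 / s))) :
    ∀ ℓ : ℕ, 1 ≤ ℓ → 0 < a ℓ →
      ξ ℓ ≤ (D * ρ ^ (1 / (2 * s)) / (1 - ρ ^ (1 / (2 * s)))) ^ s * a ℓ ^ (-s) := by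
  obtain ⟨hρ0, hρ1⟩ := hρ
  set q : ℝ := ρ ^ (1 / (2 * s)) with hq
  have hq0 : 0 < q := Real.rpow_pos_of_pos hρ0 _
  have hq1 : q < 1 := Real.rpow_lt_one hρ0.le hρ1 (by positivity)
  have h1q : 0 < 1 - q := by linarith
  intro ℓ hℓ haℓ
  -- key pointwise bound
  have key : ∀ k, k ≤ ℓ → ξ k ^ (-(1 / s)) ≤ q ^ (ℓ - k) * ξ ℓ ^ (-(1 / s)) := by
    intro k hk
    have h := hcontr k ℓ hk
    have hmono := Real.rpow_le_rpow (by positivity) h (le_of_lt (by positivity : (0:ℝ) < 1 / (2 * s)))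
    -- rewrite both sides
    have hL : (ξ ℓ ^ 2) ^ (1 / (2 * s)) = ξ ℓ ^ (1 / s) := by
      rw [← Real.rpow_natCast (ξ ℓ) 2, ← Real.rpow_mul (hξ ℓ).le]
      norm_num
      congr 1
      field_simp
    have hR : (ρ ^ (ℓ - k) * ξ k ^ 2) ^ (1 / (2 * s))
        = q ^ (ℓ - k) * ξ k ^ (1 / s) := by
      rw [Real.mul_rpow (by positivity) (by positivity)]
      congr 1
      · rw [← Real.rpow_natCast ρ (ℓ - k), ← Real.rpow_mul hρ0.le, mul_comm,
          Real.rpow_mul hρ0.le, Real.rpow_natCast]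
      · rw [← Real.rpow_natCast (ξ k) 2, ← Real.rpow_mul (hξ k).le]
        norm_num
        congr 1
        field_simp
    rw [hL, hR] at hmono
    have hA : (0:ℝ) < ξ ℓ ^ (1 / s) := Real.rpow_pos_of_pos (hξ ℓ) _
    have hC : (0:ℝ) < ξ k ^ (1 / s) := Real.rpow_pos_of_pos (hξ k) _
    rw [Real.rpow_neg (hξ k).le, Real.rpow_neg (hξ ℓ).le, inv_eq_one_div, inv_eq_one_div,
      mul_one_div, div_le_div_iff₀ hC hA]
    nlinarith [pow_pos hq0 (ℓ - k)]
  -- geometric sum bound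
  have hgeom : ∑ k ∈ Finset.range ℓ, q ^ (ℓ - k) ≤ q / (1 - q) := by
    have hre : ∑ k ∈ Finset.range ℓ, q ^ (ℓ - k) = ∑ k ∈ Finset.range ℓ, q ^ (k + 1) := by
      rw [← Finset.sum_range_reflect (fun k => q ^ (k + 1)) ℓ]
      refine Finset.sum_congr rfl fun k hk => ?_
      have := Finset.mem_range.mp hk
      congr 1
      omega
    rw [hre]
    have : ∑ k ∈ Finset.range ℓ, q ^ (k + 1) = q * ∑ k ∈ Finset.range ℓ, q ^ k := by
      rw [Finset.mul_sum]
      exact Finset.sum_congr rfl fun k _ => by ring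
    rw [this]
    have hgs : ∑ k ∈ Finset.range ℓ, q ^ k = (1 - q ^ ℓ) / (1 - q) := by
      rw [geom_sum_eq (by linarith : q ≠ 1)]
      rw [div_eq_div_iff (by linarith : q - 1 ≠ 0) (by linarith : 1 - q ≠ 0)]
      ring
    rw [hgs, div_eq_mul_inv, div_eq_mul_inv, ← mul_assoc]
    have hqℓ : 0 < q ^ ℓ := pow_pos hq0 ℓ
    have : q * (1 - q ^ ℓ) ≤ q := by nlinarith
    exact mul_le_mul_of_nonneg_right this (by positivity)
  -- combine
  have hxi : (0:ℝ) < ξ ℓ ^ (-(1 / s)) := Real.rpow_pos_of_pos (hξ ℓ) _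
  have hsum : a ℓ ≤ D * q / (1 - q) * ξ ℓ ^ (-(1 / s)) := by
    calc a ℓ ≤ D * ∑ k ∈ Finset.range ℓ, ξ k ^ (-(1 / s)) := hbound ℓ hℓ
      _ ≤ D * ∑ k ∈ Finset.range ℓ, q ^ (ℓ - k) * ξ ℓ ^ (-(1 / s)) := by
          refine mul_le_mul_of_nonneg_left ?_ hD.le
          exact Finset.sum_le_sum fun k hk => key k (Finset.mem_range.mp hk).le
      _ = D * (∑ k ∈ Finset.range ℓ, q ^ (ℓ - k)) * ξ ℓ ^ (-(1 / s)) := by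
          rw [← Finset.sum_mul]; ring
      _ ≤ D * (q / (1 - q)) * ξ ℓ ^ (-(1 / s)) := by
          refine mul_le_mul_of_nonneg_right ?_ hxi.le
          exact mul_le_mul_of_nonneg_left hgeom hD.le
      _ = D * q / (1 - q) * ξ ℓ ^ (-(1 / s)) := by ring
  set C : ℝ := D * q / (1 - q) with hC
  have hCpos : 0 < C := by positivity
  -- a ℓ * ξ ℓ ^ (1/s) ≤ C
  have hmain : ξ ℓ ^ (1 / s) ≤ C / a ℓ := by
    have hinv : ξ ℓ ^ (-(1 / s)) = (ξ ℓ ^ (1 / s))⁻¹ := Real.rpow_neg (hξ ℓ).le _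
    rw [hinv] at hsum
    have hA : (0:ℝ) < ξ ℓ ^ (1 / s) := Real.rpow_pos_of_pos (hξ ℓ) _
    rw [div_eq_mul_inv]
    rw [le_div_iff₀ haℓ] at *
    calc ξ ℓ ^ (1 / s) * a ℓ ≤ ξ ℓ ^ (1 / s) * (C * (ξ ℓ ^ (1 / s))⁻¹) :=
          mul_le_mul_of_nonneg_left hsum hA.le
      _ = C := by field_simp
  -- raise to power s
  have hfin := Real.rpow_le_rpow (Real.rpow_nonneg (hξ ℓ).le _) hmain hs.le
  have hLfin : ((ξ ℓ) ^ (1 / s)) ^ s = ξ ℓ := by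
    rw [← Real.rpow_mul (hξ ℓ).le, one_div, inv_mul_cancel₀ hs.ne', Real.rpow_one]
  have hRfin : (C / a ℓ) ^ s = C ^ s * a ℓ ^ (-s) := by
    rw [Real.div_rpow hCpos.le haℓ.le, Real.rpow_neg haℓ.le, div_eq_mul_inv]
  rw [hLfin, hRfin] at hfin
  exact hfin
end
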